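/- arXiv:1505.07578 — 4 statements merged into one kernel-verified Lean document; each statement's English description precedes it below -/
import Mathlib

section
/- A collection 𝒞 ⊆ Set (Set ℕ) is a Π⁰₁ class that contains Set.univ and is closed under binary intersections if and only if there exists a recursively enumerable set S of nonempty lists of natural numbers with 𝒞 = V(S). -/
/-- A set `X ⊆ ℕ` satisfies the Horn implications encoded by `S`:
a list `n₀ :: t ∈ S` means `(∀ m ∈ t, m ∈ X) → n₀ ∈ X`. -/
def SatisfiesHorn (S : Set (List ℕ)) (X : Set ℕ) : Prop :=
  ∀ n₀ : ℕ, ∀ t : List ℕ, (n₀ :: t) ∈ S → (∀ m ∈ t, m ∈ X) → n₀ ∈ X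

/-- The quasivariety defined by `S`. -/
def QV (S : Set (List ℕ)) : Set (Set ℕ) := {X | SatisfiesHorn S X}

/-- The closure of `Y`: the smallest element of `QV S` containing `Y`. -/
def QVclosure (S : Set (List ℕ)) (Y : Set ℕ) : Set ℕ :=
  ⋂₀ {X | X ∈ QV S ∧ Y ⊆ X}

/-- `A` is enumeration reducible to `B` via `f`. -/
def EnumRedVia (A B : Set ℕ) (f : ℕ × ℕ → Option (Finset ℕ)) : Prop :=
  Computable f ∧
    ∀ x : ℕ, x ∈ A ↔ ∃ n : ℕ, ∃ F : Finset ℕ, f (x, n) = some F ∧ ↑F ⊆ B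

/-- `A` is enumeration reducible to `B`. -/
def EnumRed (A B : Set ℕ) : Prop := ∃ f : ℕ × ℕ → Option (Finset ℕ), EnumRedVia A B f

/-- `𝒞` is a Π⁰₁ class: there is an r.e. set of pairs of finite sets acting as
forbidden patterns (positive part / negative part). -/
def Pi01Class (𝒞 : Set (Set ℕ)) : Prop :=
  ∃ F : Set (Finset ℕ × Finset ℕ), REPred (· ∈ F) ∧
    ∀ X : Set ℕ, X ∈ 𝒞 ↔ ∀ p ∈ F, ¬((↑p.1 : Set ℕ) ⊆ X ∧ (↑p.2 : Set ℕ) ∩ X = ∅)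

/-!
A pair `(A, B)` of finite sets is a clause `⋀ A → ⋁ B`, and Π⁰₁ classes are exactly the classes of
models of r.e. sets of clauses. If such a class `𝒞` contains `ℕ` and is closed under binary
intersections, then the hull of a finite set (the intersection of all members of `𝒞` containing it)
lies in `𝒞` again: a clause has only finitely many variables in its conclusion, so if it failed in
the hull it would fail in a finite intersection of members. Hence `𝒞` is axiomatized by its Horn
theory. That theory is r.e. by compactness: a Horn clause valid in `𝒞` already follows from a finite
stage of the enumeration of the clauses, and consequence from finitely many clauses is decided by
the finitely many subsets of the variables they mention. Conversely, a Horn clause is a clause with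
a singleton conclusion, so `V(S)` is the class of models of an r.e. set of clauses.
-/

open Encodable Denumerable

section Computability

variable {α : Type*} [Primcodable α]

theorem Primrec.list_mem : PrimrecRel fun (a : α) (l : List α) => a ∈ l :=
  (PrimrecRel.exists_mem_list Primrec.eq).swap.of_eq fun a l => by simp [Function.swap]

theorem Primrec.list_sublists' : Primrec (@List.sublists' α) :=
  (Primrec.list_foldr (f := id) (g := fun _ => [[]]) (h := fun _ q => q.2 ++ q.2.map (q.1 :: ·))
    Primrec.id (Primrec.const _)
    (Primrec.list_append.comp (Primrec.snd.comp Primrec.snd)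
      (Primrec.list_map (Primrec.snd.comp Primrec.snd)
        (Primrec.list_cons.comp (Primrec.fst.comp (Primrec.snd.comp Primrec.fst))
          Primrec.snd).to₂)).to₂).of_eq
    fun l => by induction l with
      | nil => rfl
      | cons a l ih => simp only [id, List.foldr_cons] at ih ⊢; rw [ih, List.sublists'_cons]

theorem fst_foldl_eq_append_raise' (l acc : List ℕ) (n : ℕ) :
    (l.foldl (fun q m => (q.1 ++ [m + q.2], m + q.2 + 1)) (acc, n)).1 = acc ++ raise' l n := by
  induction l generalizing acc n with
  | nil => simp [raise']
  | cons m l ih => simp [ih, raise']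

theorem Primrec.raise' : Primrec₂ raise' :=
  (Primrec.fst.comp (Primrec.list_foldl Primrec.fst ((Primrec.const []).pair Primrec.snd)
    ((Primrec.list_concat.comp (Primrec.fst.comp (Primrec.fst.comp Primrec.snd))
        (Primrec.nat_add.comp (Primrec.snd.comp Primrec.snd)
          (Primrec.snd.comp (Primrec.fst.comp Primrec.snd)))).pair
      (Primrec.succ.comp (Primrec.nat_add.comp (Primrec.snd.comp Primrec.snd)
          (Primrec.snd.comp (Primrec.fst.comp Primrec.snd))))).to₂)).of_eq
    fun p => by simpa using fst_foldl_eq_append_raise' p.1 [] p.2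

theorem Primrec.finset_sort : Primrec fun s : Finset ℕ => s.sort (· ≤ ·) := by
  refine (Primrec.raise'.comp ((Primrec.ofNat (List ℕ)).comp Primrec.encode)
    (Primrec.const 0)).of_eq fun s => ?_
  have : s.map (eqv ℕ).toEmbedding = s := by ext; simp [eqv]
  change Denumerable.raise' (ofNat (List ℕ)
    (encode (lower' ((s.map (eqv ℕ).toEmbedding).sort (· ≤ ·)) 0))) 0 = _
  rw [this, ofNat_encode, raise_lower' (fun _ _ => Nat.zero_le _) (Finset.sortedLT_sort s)]

theorem primrecRel_eq_toFinset : PrimrecRel fun (s : Finset ℕ) (l : List ℕ) => s = l.toFinset :=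
  (((PrimrecRel.forall_mem_list Primrec.list_mem).comp
      (Primrec.finset_sort.comp Primrec.fst) Primrec.snd).and
    ((PrimrecRel.forall_mem_list Primrec.list_mem).comp
      Primrec.snd (Primrec.finset_sort.comp Primrec.fst))).of_eq
    fun q => by simp [Finset.ext_iff, iff_def, forall_and]

theorem REPred.exists_primrecRel {p : α → Prop} (hp : REPred p) :
    ∃ R : α → ℕ → Prop, PrimrecRel R ∧ (∀ a, Monotone (R a)) ∧ ∀ a, p a ↔ ∃ k, R a k := by
  obtain ⟨c, hc⟩ := Nat.Partrec.Code.exists_code.1 hp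
  refine ⟨fun a k => (c.evaln k (encode a)).isSome, Primrec₂.primrecRel ?_, ?_, fun a => ?_⟩
  · exact (Primrec.option_isSome.comp (Nat.Partrec.Code.primrec_evaln.comp
      ((Primrec.snd.pair (Primrec.const c)).pair (Primrec.encode.comp Primrec.fst)))).of_eq
      fun _ => Bool.decide_eq_true.symm
  · intro a k k' hkk' h
    obtain ⟨x, hx⟩ := Option.isSome_iff_exists.1 h
    exact Option.isSome_iff_exists.2 ⟨x, Nat.Partrec.Code.evaln_mono hkk' hx⟩
  · have hdom : p a ↔ (c.eval (encode a)).Dom := by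
      simp [hc, Part.assert]
    simp only [hdom, Part.dom_iff_mem, Nat.Partrec.Code.evaln_complete, Option.isSome_iff_exists,
      Option.mem_def]
    exact exists_comm

theorem PrimrecRel.rePred_exists {R : α → ℕ → Prop} (hR : PrimrecRel R) :
    REPred fun a => ∃ k, R a k := by
  classical
  refine (Partrec.rfind (p := fun a => ((fun k => decide (R a k) : ℕ → Bool) : ℕ →. Bool))
    hR.decide.to_comp.partrec).dom_re.of_eq fun a => ?_
  simp [Nat.rfind_dom]

theorem REPred.exists_and_primrecRel {β : Type*} [Denumerable β] {S : β → Prop}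
    {Q : α → β → Prop} (hS : REPred S) (hQ : PrimrecRel Q) :
    REPred fun a => ∃ b, S b ∧ Q a b := by
  obtain ⟨R, hR, -, hSR⟩ := hS.exists_primrecRel
  have hb : Primrec fun q : α × ℕ => ofNat β q.2.unpair.1 :=
    (Primrec.ofNat β).comp (Primrec.fst.comp (Primrec.unpair.comp Primrec.snd))
  refine (PrimrecRel.rePred_exists
    (R := fun a n => R (ofNat β n.unpair.1) n.unpair.2 ∧ Q a (ofNat β n.unpair.1))
    ((hR.comp hb (Primrec.snd.comp (Primrec.unpair.comp Primrec.snd))).and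
      (hQ.comp Primrec.fst hb))).of_eq fun a => ⟨?_, ?_⟩
  · rintro ⟨n, hR, hQ⟩
    exact ⟨_, (hSR _).2 ⟨_, hR⟩, hQ⟩
  · rintro ⟨b, hS, hQ⟩
    obtain ⟨k, hk⟩ := (hSR b).1 hS
    exact ⟨Nat.pair (encode b) k, by simpa using hk, by simpa using hQ⟩

end Computability

abbrev Clause := Finset ℕ × Finset ℕ

/-- `X` satisfies the clause `c`, read as the implication `⋀ c.1 → ⋁ c.2`. -/
def Sat (X : Set ℕ) (c : Clause) : Prop :=
  (∀ a ∈ c.1, a ∈ X) → ∃ b ∈ c.2, b ∈ X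

def models (F : Set Clause) : Set (Set ℕ) := {X | ∀ c ∈ F, Sat X c}

theorem sat_iff {X : Set ℕ} {c : Clause} :
    Sat X c ↔ ¬((↑c.1 : Set ℕ) ⊆ X ∧ (↑c.2 : Set ℕ) ∩ X = ∅) := by
  simp [Sat, Set.subset_def, Set.eq_empty_iff_forall_notMem]

theorem pi01Class_iff {𝒞 : Set (Set ℕ)} :
    Pi01Class 𝒞 ↔ ∃ F : Set Clause, REPred (· ∈ F) ∧ 𝒞 = models F := by
  simp only [Pi01Class, Set.ext_iff, models, Set.mem_ofPred_eq, sat_iff]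

theorem sat_inter_iff {X V : Set ℕ} {c : Clause} (h₁ : ∀ a ∈ c.1, a ∈ V)
    (h₂ : ∀ a ∈ c.2, a ∈ V) : Sat (X ∩ V) c ↔ Sat X c := by
  simp only [Sat, Set.mem_inter_iff]
  grind

theorem sat_ultralimit {ι : Type*} {U : Ultrafilter ι} {Y : ι → Set ℕ} {c : Clause}
    (h : ∀ᶠ i in U, Sat (Y i) c) : Sat {m | ∀ᶠ i in U, m ∈ Y i} c := by
  intro h₁
  have : ∀ᶠ i in U, ∃ b ∈ c.2, b ∈ Y i :=
    h.mp ((Filter.eventually_all_finset c.1).2 h₁ |>.mono fun _ h₁ h => h h₁)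
  exact (Ultrafilter.eventually_exists_mem_iff c.2.finite_toSet).1 this

theorem sInter_mem_models {F : Set Clause} {𝒟 : Set (Set ℕ)} (h𝒟 : 𝒟 ⊆ models F)
    (hne : 𝒟.Nonempty) (hinter : ∀ X ∈ 𝒟, ∀ Y ∈ 𝒟, X ∩ Y ∈ 𝒟) : ⋂₀ 𝒟 ∈ models F := by
  intro c hc h₁
  by_contra! h₂
  have hdir : DirectedOn (fun X Y : Set ℕ => Xᶜ ⊆ Yᶜ) 𝒟 := fun X hX Y hY =>
    ⟨X ∩ Y, hinter X hX Y hY, by simp, by simp⟩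
  obtain ⟨Z, hZ, hcZ⟩ := hdir.exists_mem_subset_of_finset_subset_biUnion hne (s := c.2)
    fun b hb => by simpa using h₂ b hb
  obtain ⟨b, hb, hbZ⟩ := h𝒟 hZ c hc fun a ha => Set.mem_sInter.1 (h₁ a ha) Z hZ
  exact hcZ hb hbZ

def hornClause (l : List ℕ) : Clause := (l.tail.toFinset, {l.headI})

theorem sat_hornClause_cons {X : Set ℕ} {b : ℕ} {t : List ℕ} :
    Sat X (hornClause (b :: t)) ↔ ((∀ m ∈ t, m ∈ X) → b ∈ X) := by
  simp [Sat, hornClause]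

theorem QV_eq_models_image_hornClause {S : Set (List ℕ)} (hS : ∀ l ∈ S, l ≠ []) :
    QV S = models (hornClause '' S) := by
  ext X
  simp only [QV, SatisfiesHorn, models, Set.mem_ofPred_eq, Set.forall_mem_image]
  constructor
  · intro h l hl
    obtain ⟨b, t, rfl⟩ := List.exists_cons_of_ne_nil (hS l hl)
    exact sat_hornClause_cons.2 (h b t hl)
  · exact fun h b t hl => sat_hornClause_cons.1 (h hl)

theorem rePred_mem_image_hornClause {S : Set (List ℕ)} (hS : REPred (· ∈ S)) :
    REPred (· ∈ hornClause '' S) := by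
  have : PrimrecRel fun (c : Clause) (l : List ℕ) => hornClause l = c :=
    ((primrecRel_eq_toFinset.comp (Primrec.fst.comp Primrec.fst)
        (Primrec.list_tail.comp Primrec.snd)).and
      (primrecRel_eq_toFinset.comp (Primrec.snd.comp Primrec.fst)
        (Primrec.list_cons.comp (Primrec.list_headI.comp Primrec.snd) (Primrec.const [])))).of_eq
      fun q => by simp [hornClause, Prod.ext_iff, eq_comm]
  exact (hS.exists_and_primrecRel this).of_eq fun c => by simp [Set.mem_image]

theorem inter_mem_QV {S : Set (List ℕ)} {X Y : Set ℕ} (hX : X ∈ QV S) (hY : Y ∈ QV S) :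
    X ∩ Y ∈ QV S := fun b t hl ht =>
  ⟨hX b t hl fun m hm => (ht m hm).1, hY b t hl fun m hm => (ht m hm).2⟩

def hornTheory (𝒞 : Set (Set ℕ)) : Set (List ℕ) :=
  {l | l ≠ [] ∧ ∀ X ∈ 𝒞, (∀ m ∈ l.tail, m ∈ X) → l.headI ∈ X}

theorem cons_mem_hornTheory {𝒞 : Set (Set ℕ)} {b : ℕ} {t : List ℕ} :
    b :: t ∈ hornTheory 𝒞 ↔ ∀ X ∈ 𝒞, (∀ m ∈ t, m ∈ X) → b ∈ X := by
  simp [hornTheory]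

theorem QV_hornTheory_models {F : Set Clause} (huniv : Set.univ ∈ models F)
    (hinter : ∀ X ∈ models F, ∀ Y ∈ models F, X ∩ Y ∈ models F) :
    QV (hornTheory (models F)) = models F := by
  ext X
  refine ⟨fun hX c hc h₁ => ?_, fun hX b t hl ht => cons_mem_hornTheory.1 hl X hX ht⟩
  set W := ⋂₀ {Z ∈ models F | ↑c.1 ⊆ Z}
  have hW : W ∈ models F :=
    sInter_mem_models (fun _ hZ => hZ.1) ⟨Set.univ, huniv, Set.subset_univ _⟩
      fun Y hY Z hZ => ⟨hinter Y hY.1 Z hZ.1, Set.subset_inter hY.2 hZ.2⟩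
  obtain ⟨b, hb, hbW⟩ := hW c hc fun a ha => Set.mem_sInter.2 fun Z hZ => hZ.2 ha
  refine ⟨b, hb, hX b c.1.toList (cons_mem_hornTheory.2 fun Z hZ hcZ => ?_) (by simpa using h₁)⟩
  exact Set.mem_sInter.1 hbW Z ⟨hZ, fun a ha => hcZ a (by simpa using ha)⟩

def clauseVars (L : List Clause) : List ℕ :=
  L.flatMap fun c => c.1.sort (· ≤ ·) ++ c.2.sort (· ≤ ·)

theorem Primrec.clauseVars : Primrec clauseVars :=
  Primrec.list_flatMap Primrec.id (Primrec.list_append.comp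
    (Primrec.finset_sort.comp (Primrec.fst.comp Primrec.snd))
    (Primrec.finset_sort.comp (Primrec.snd.comp Primrec.snd))).to₂

/-- Only the variables of finitely many clauses matter for their models, so their Horn theory is
decided by the finitely many sets of those variables. -/
theorem mem_hornTheory_models_list_iff {L : List Clause} {l : List ℕ} :
    l ∈ hornTheory (models {c | c ∈ L}) ↔ l ≠ [] ∧ ∀ Y ∈ (l ++ clauseVars L).sublists',
      (∀ c ∈ L, Sat {m | m ∈ Y} c) → (∀ m ∈ l.tail, m ∈ Y) → l.headI ∈ Y := by
  simp only [hornTheory, models, Set.mem_ofPred_eq]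
  refine and_congr_right fun hl => ⟨fun h Y _ => h {m | m ∈ Y}, fun h X hX ht => ?_⟩
  classical
  set V := l ++ clauseVars L
  have hYX : {m | m ∈ V.filter (· ∈ X)} = X ∩ {m | m ∈ V} := by ext; simp [and_comm]
  have hvars : ∀ c ∈ L, ∀ a ∈ c.1 ∪ c.2, a ∈ V := fun c hc a ha =>
    List.mem_append_right _ (List.mem_flatMap.2 ⟨c, hc, by simpa using ha⟩)
  have hsat : ∀ c ∈ L, Sat {m | m ∈ V.filter (· ∈ X)} c := fun c hc => by
    rw [hYX, sat_inter_iff (V := {m | m ∈ V}) (fun a ha => hvars c hc a (by simp [ha]))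
      (fun a ha => hvars c hc a (by simp [ha]))]
    exact hX c hc
  have hb := h _ (List.mem_sublists'.2 List.filter_sublist) hsat fun m hm =>
    List.mem_filter.2 ⟨List.mem_append_left _ (List.mem_of_mem_tail hm), decide_eq_true (ht m hm)⟩
  exact of_decide_eq_true (List.mem_filter.1 hb).2

theorem primrecRel_sat : PrimrecRel fun (Y : List ℕ) (c : Clause) => Sat {m | m ∈ Y} c :=
  (((PrimrecRel.forall_mem_list Primrec.list_mem).comp
      (Primrec.finset_sort.comp (Primrec.fst.comp Primrec.snd)) Primrec.fst).not.or
    ((PrimrecRel.exists_mem_list Primrec.list_mem).comp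
      (Primrec.finset_sort.comp (Primrec.snd.comp Primrec.snd)) Primrec.fst)).of_eq
    fun q => by simp [Sat, imp_iff_not_or]

theorem primrecRel_mem_hornTheory_models_list :
    PrimrecRel fun (L : List Clause) (l : List ℕ) => l ∈ hornTheory (models {c | c ∈ L}) := by
  open Primrec in
  have hbody : PrimrecRel fun (Y : List ℕ) (q : List Clause × List ℕ) =>
      (∀ c ∈ q.1, Sat {m | m ∈ Y} c) → (∀ m ∈ q.2.tail, m ∈ Y) → q.2.headI ∈ Y :=
    (((PrimrecRel.forall_mem_list primrecRel_sat.swap).comp (fst.comp snd) fst).not.or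
      (((PrimrecRel.forall_mem_list list_mem).comp (list_tail.comp (snd.comp snd)) fst).not.or
        (list_mem.comp (list_headI.comp (snd.comp snd)) fst))).of_eq
      fun q => by simp [imp_iff_not_or, Function.swap]
  open Primrec in
  exact ((Primrec.eq.comp snd (const [])).not.and ((PrimrecRel.forall_mem_list hbody).comp
    (list_sublists'.comp (list_append.comp snd (Primrec.clauseVars.comp fst))) Primrec.id)).of_eq
    fun q => mem_hornTheory_models_list_iff.symm

def stage (R : Clause → ℕ → Prop) [DecidableRel R] (k : ℕ) : List Clause :=
  ((List.range k).map (ofNat Clause)).filter (R · k)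

theorem mem_stage {R : Clause → ℕ → Prop} [DecidableRel R] {k : ℕ} {c : Clause} :
    c ∈ stage R k ↔ (∃ n < k, ofNat Clause n = c) ∧ R c k := by
  simp [stage]

theorem Primrec.stage {R : Clause → ℕ → Prop} [DecidableRel R] (hR : PrimrecRel R) :
    Primrec (stage R) :=
  (PrimrecRel.listFilter hR).comp
    (Primrec.list_map Primrec.list_range ((Primrec.ofNat Clause).comp Primrec.snd).to₂) Primrec.id

/-- Compactness, via an ultralimit of counter-models to the finite stages. -/
theorem mem_hornTheory_models_iff_exists_stage {F : Set Clause} {R : Clause → ℕ → Prop}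
    [DecidableRel R] (hmono : ∀ c, Monotone (R c)) (hF : ∀ c, c ∈ F ↔ ∃ k, R c k)
    {l : List ℕ} :
    l ∈ hornTheory (models F) ↔ ∃ k, l ∈ hornTheory (models {c | c ∈ stage R k}) := by
  refine ⟨fun ⟨hl, h⟩ => ?_, fun ⟨k, hl, h⟩ =>
    ⟨hl, fun X hX => h X fun c hc => hX c ((hF c).2 ⟨k, (mem_stage.1 hc).2⟩)⟩⟩
  by_contra! hk
  have : ∀ k, ∃ Y ∈ models {c | c ∈ stage R k}, (∀ m ∈ l.tail, m ∈ Y) ∧ l.headI ∉ Y := by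
    simpa [hornTheory, hl] using hk
  choose Y hY ht hb using this
  let U : Ultrafilter ℕ := Filter.hyperfilter ℕ
  have hX : {m | ∀ᶠ k in U, m ∈ Y k} ∈ models F := by
    intro c hc
    obtain ⟨k₀, hk₀⟩ := (hF c).1 hc
    obtain ⟨n, hn⟩ := (eqv Clause).symm.surjective c
    have hstage : ∀ᶠ k in Filter.atTop, c ∈ stage R k :=
      ((Filter.eventually_gt_atTop n).and (Filter.eventually_ge_atTop k₀)).mono
        fun k hk => mem_stage.2 ⟨⟨n, hk.1, hn⟩, hmono c hk.2 hk₀⟩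
    refine sat_ultralimit ((hstage.filter_mono ?_).mono fun k hk => hY k c hk)
    exact Filter.hyperfilter_le_cofinite.trans Nat.cofinite_eq_atTop.le
  obtain ⟨k, hk⟩ := (h _ hX fun m hm => .of_forall fun k => ht k m hm).exists
  exact hb k hk

theorem rePred_mem_hornTheory_models {F : Set Clause} (hF : REPred (· ∈ F)) :
    REPred (· ∈ hornTheory (models F)) := by
  classical
  obtain ⟨R, hR, hmono, hFR⟩ := hF.exists_primrecRel
  exact (PrimrecRel.rePred_exists (R := fun l k => l ∈ hornTheory (models {c | c ∈ stage R k}))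
    (primrecRel_mem_hornTheory_models_list.comp ((Primrec.stage hR).comp Primrec.snd)
      Primrec.fst)).of_eq fun l => (mem_hornTheory_models_iff_exists_stage hmono hFR).symm

/-- A Π⁰₁ class containing `Set.univ` and closed under binary intersections is
exactly a quasivariety defined by an r.e. set of nonempty lists. -/
theorem pi01_iff_quasivariety (𝒞 : Set (Set ℕ)) :
    (Pi01Class 𝒞 ∧ Set.univ ∈ 𝒞 ∧ ∀ X ∈ 𝒞, ∀ Y ∈ 𝒞, X ∩ Y ∈ 𝒞) ↔
    (∃ S : Set (List ℕ), (∀ l ∈ S, l ≠ []) ∧ REPred (· ∈ S) ∧ 𝒞 = QV S) := by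
  constructor
  · rintro ⟨h𝒞, huniv, hinter⟩
    obtain ⟨F, hF, rfl⟩ := pi01Class_iff.1 h𝒞
    exact ⟨hornTheory (models F), fun l hl => hl.1, rePred_mem_hornTheory_models hF,
      (QV_hornTheory_models huniv hinter).symm⟩
  · rintro ⟨S, hS, hSre, rfl⟩
    exact ⟨pi01Class_iff.2 ⟨_, rePred_mem_image_hornClause hSre, QV_eq_models_image_hornClause hS⟩,
      fun _ _ _ _ => Set.mem_univ _, fun _ hX _ hY => inter_mem_QV hX hY⟩
end

section
/- Let S be a recursively enumerable set of nonempty lists of natural numbers. If Y ⊆ ℕ is recursively enumerable (REPred (· ∈ Y)) and X = C(Y) is the closure of Y in V(S), then X is recursively enumerable (REPred (· ∈ X)). In particular every finitely presented or recursively presented element of V(S) is a recursively enumerable subset of ℕ. -/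
open Encodable Nat.Partrec

theorem List.exists_forall_mem_of_monotone {α : Type*} {P : α → ℕ → Prop}
    (hP : ∀ a, Monotone (P a)) {l : List α} (h : ∀ a ∈ l, ∃ k, P a k) :
    ∃ K, ∀ a ∈ l, P a K := by
  induction l with
  | nil => exact ⟨0, by simp⟩
  | cons a l ih =>
    obtain ⟨k, hk⟩ := h a List.mem_cons_self
    obtain ⟨K, hK⟩ := ih fun b hb => h b (List.mem_cons_of_mem a hb)
    refine ⟨max k K, List.forall_mem_cons.2 ⟨hP a (le_max_left k K) hk, fun b hb => ?_⟩⟩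
    exact hP b (le_max_right k K) (hK b hb)

namespace REPred

variable {α β : Type*} [Primcodable α] [Primcodable β]

theorem comp {p : α → Prop} {f : β → α} (hp : REPred p) (hf : Computable f) :
    REPred fun b => p (f b) :=
  Partrec.comp hp hf

theorem exists_monotone_primrecRel {p : α → Prop} (hp : REPred p) :
    ∃ R : α → ℕ → Prop,
      PrimrecRel R ∧ (∀ a, Monotone (R a)) ∧ ∀ a, p a ↔ ∃ k, R a k := by
  obtain ⟨c, hc⟩ := Code.exists_code.1 hp
  have hdom : ∀ a, p a ↔ (c.eval (encode a)).Dom := fun a => by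
    simp [hc, Part.assert, encodek]
  refine ⟨fun a k => (c.evaln k (encode a)).isSome, ?_, ?_, fun a => ?_⟩
  · exact Primrec₂.primrecRel <| (Primrec.option_isSome.comp <| Code.primrec_evaln.comp <|
      (Primrec.snd.pair (Primrec.const c)).pair (Primrec.encode.comp Primrec.fst)).of_eq
      fun _ => by simp
  · intro a k k' hkk' hk
    obtain ⟨x, hx⟩ := Option.isSome_iff_exists.1 hk
    exact Option.isSome_iff_exists.2 ⟨x, Code.evaln_mono hkk' hx⟩
  · simp only [hdom, Part.dom_iff_mem, Option.isSome_iff_exists, ← Option.mem_def,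
      Code.evaln_complete]
    exact ⟨fun ⟨x, k, hk⟩ => ⟨k, x, hk⟩, fun ⟨k, x, hk⟩ => ⟨x, k, hk⟩⟩

theorem _root_.PrimrecRel.rePred_exists_s3 {R : α → β → Prop} (hR : PrimrecRel R) :
    REPred fun a => ∃ b, R a b := by
  classical
  have hswap : PrimrecRel fun (b : β) (a : α) => R a b := hR.comp Primrec.snd Primrec.fst
  have hdec : PrimrecRel fun a n => ∃ b ∈ (decode (α := β) n).toList, R a b :=
    (PrimrecRel.exists_mem_list hswap).comp
      (Primrec.optionToList.comp (Primrec.decode.comp Primrec.snd)) Primrec.fst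
  refine (Partrec.rfind hdec.decide.to_comp.partrec.to₂).dom_re.of_eq fun a => ?_
  simp only [PFun.coe_val]
  refine Nat.rfind_dom.trans ?_
  simp only [Option.mem_toList, Part.mem_some_iff, true_eq_decide_iff, Part.some_dom,
    implies_true, and_true]
  exact ⟨fun ⟨_, b, _, hb⟩ => ⟨b, hb⟩, fun ⟨b, hb⟩ => ⟨encode b, b, encodek b, hb⟩⟩

theorem exists_snd {R : α → β → Prop} (hR : REPred fun q : α × β => R q.1 q.2) :
    REPred fun a => ∃ b, R a b := by
  obtain ⟨T, hT, -, hRT⟩ := hR.exists_monotone_primrecRel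
  have hT' : PrimrecRel fun (a : α) (q : β × ℕ) => T (a, q.1) q.2 :=
    hT.comp (Primrec.fst.pair (Primrec.fst.comp Primrec.snd)) (Primrec.snd.comp Primrec.snd)
  exact hT'.rePred_exists_s3.of_eq fun a =>
    Prod.exists.trans (exists_congr fun b => (hRT (a, b)).symm)

protected theorem and {p q : α → Prop} (hp : REPred p) (hq : REPred q) :
    REPred fun a => p a ∧ q a := by
  obtain ⟨P, hP, hPmono, hpP⟩ := hp.exists_monotone_primrecRel
  obtain ⟨Q, hQ, hQmono, hqQ⟩ := hq.exists_monotone_primrecRel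
  refine (PrimrecRel.rePred_exists_s3 (R := fun a k => P a k ∧ Q a k) (hP.and hQ)).of_eq
    fun a => ?_
  simp only [hpP, hqQ]
  refine ⟨fun ⟨k, hPk, hQk⟩ => ⟨⟨k, hPk⟩, k, hQk⟩, fun ⟨⟨k, hPk⟩, l, hQl⟩ => ?_⟩
  exact ⟨max k l, hPmono a (le_max_left k l) hPk, hQmono a (le_max_right k l) hQl⟩

protected theorem or {p q : α → Prop} (hp : REPred p) (hq : REPred q) :
    REPred fun a => p a ∨ q a := by
  obtain ⟨P, hP, -, hpP⟩ := hp.exists_monotone_primrecRel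
  obtain ⟨Q, hQ, -, hqQ⟩ := hq.exists_monotone_primrecRel
  exact (PrimrecRel.rePred_exists_s3 (R := fun a k => P a k ∨ Q a k) (hP.or hQ)).of_eq
    fun a => by simp only [hpP, hqQ, exists_or]

theorem forall_mem_list {p : α → Prop} (hp : REPred p) :
    REPred fun l : List α => ∀ a ∈ l, p a := by
  obtain ⟨P, hP, hPmono, hpP⟩ := hp.exists_monotone_primrecRel
  refine (PrimrecRel.forall_mem_list hP).rePred_exists_s3.of_eq fun l => ?_
  simp only [hpP]
  exact ⟨fun ⟨K, hK⟩ a ha => ⟨K, hK a ha⟩, List.exists_forall_mem_of_monotone hPmono⟩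

end REPred

namespace Horn

/- Derivations are listed newest rule first. A rule `n₀ :: t` concludes `n₀` from the premises
`t`; the empty rule concludes nothing. -/
def conclusions (w : List (List ℕ)) : List ℕ := w.filterMap List.head?

def IsChained : List (List ℕ) → Prop
  | [] => True
  | l :: w => (∀ m ∈ l.tail, m ∈ conclusions w) ∧ IsChained w

def Derivable (S : Set (List ℕ)) : Set ℕ :=
  {x | ∃ w : List (List ℕ), (∀ l ∈ w, l ∈ S) ∧ IsChained w ∧ x ∈ conclusions w}

theorem conclusions_append (w₁ w₂ : List (List ℕ)) :
    conclusions (w₁ ++ w₂) = conclusions w₁ ++ conclusions w₂ :=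
  List.filterMap_append

theorem IsChained.append {w₁ w₂ : List (List ℕ)} (h₁ : IsChained w₁) (h₂ : IsChained w₂) :
    IsChained (w₁ ++ w₂) := by
  induction w₁ with
  | nil => exact h₂
  | cons l w₁ ih =>
    change IsChained (l :: (w₁ ++ w₂))
    refine ⟨fun m hm => ?_, ih h₁.2⟩
    rw [conclusions_append]
    exact List.mem_append_left _ (h₁.1 m hm)

theorem conclusions_subset_of_satisfiesHorn {S : Set (List ℕ)} {X : Set ℕ}
    (hX : SatisfiesHorn S X) {w : List (List ℕ)} (hwS : ∀ l ∈ w, l ∈ S) (hw : IsChained w) :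
    ∀ m ∈ conclusions w, m ∈ X := by
  induction w with
  | nil => simp [conclusions]
  | cons l w ih =>
    have hwX := ih (fun l' hl' => hwS l' (List.mem_cons_of_mem l hl')) hw.2
    rcases l with _ | ⟨n₀, t⟩
    · simpa [conclusions] using hwX
    · have hn₀ : n₀ ∈ X := hX n₀ t (hwS _ List.mem_cons_self) fun m hm => hwX m (hw.1 m hm)
      simpa [conclusions, hn₀] using hwX

theorem Derivable.subset_of_satisfiesHorn {S : Set (List ℕ)} {X : Set ℕ}
    (hX : SatisfiesHorn S X) : Derivable S ⊆ X :=
  fun _ ⟨_, hwS, hw, hx⟩ => conclusions_subset_of_satisfiesHorn hX hwS hw _ hx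

theorem exists_derivation_of_forall_mem_derivable {S : Set (List ℕ)} {t : List ℕ}
    (ht : ∀ m ∈ t, m ∈ Derivable S) :
    ∃ w : List (List ℕ), (∀ l ∈ w, l ∈ S) ∧ IsChained w ∧ ∀ m ∈ t, m ∈ conclusions w := by
  induction t with
  | nil => exact ⟨[], by simp, trivial, by simp⟩
  | cons m t ih =>
    obtain ⟨w₁, hw₁S, hw₁, hm⟩ := ht m List.mem_cons_self
    obtain ⟨w₂, hw₂S, hw₂, ht⟩ := ih fun m' hm' => ht m' (List.mem_cons_of_mem m hm')
    refine ⟨w₁ ++ w₂, ?_, hw₁.append hw₂, ?_⟩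
    · intro l hl
      rcases List.mem_append.1 hl with hl | hl
      exacts [hw₁S l hl, hw₂S l hl]
    · rw [conclusions_append]
      exact List.forall_mem_cons.2
        ⟨List.mem_append_left _ hm, fun m' hm' => List.mem_append_right _ (ht m' hm')⟩

theorem satisfiesHorn_derivable (S : Set (List ℕ)) : SatisfiesHorn S (Derivable S) := by
  intro n₀ t hS ht
  obtain ⟨w, hwS, hw, htw⟩ := exists_derivation_of_forall_mem_derivable ht
  refine ⟨(n₀ :: t) :: w, List.forall_mem_cons.2 ⟨hS, hwS⟩, ⟨htw, hw⟩, ?_⟩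
  simp [conclusions]

theorem QVclosure_empty_eq_derivable (S : Set (List ℕ)) : QVclosure S ∅ = Derivable S :=
  subset_antisymm (Set.sInter_subset_of_mem ⟨satisfiesHorn_derivable S, Set.empty_subset _⟩)
    (Set.subset_sInter fun _ hX => Derivable.subset_of_satisfiesHorn hX.1)

theorem satisfiesHorn_union_singleton_image_iff {S : Set (List ℕ)} {Y X : Set ℕ} :
    SatisfiesHorn (S ∪ List.singleton '' Y) X ↔ SatisfiesHorn S X ∧ Y ⊆ X := by
  refine ⟨fun h => ⟨fun n₀ t hS => h n₀ t (Or.inl hS),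
    fun y hy => h y [] (Or.inr ⟨y, hy, rfl⟩) (by simp)⟩, ?_⟩
  rintro ⟨hS, hY⟩ n₀ t (hn₀t | ⟨y, hy, hyt⟩) ht
  · exact hS n₀ t hn₀t ht
  · obtain ⟨rfl, rfl⟩ := List.cons_eq_cons.1 hyt
    exact hY hy

theorem QVclosure_eq_QVclosure_union_singleton_image (S : Set (List ℕ)) (Y : Set ℕ) :
    QVclosure S Y = QVclosure (S ∪ List.singleton '' Y) ∅ := by
  simp only [QVclosure, QV, Set.mem_ofPred_eq, satisfiesHorn_union_singleton_image_iff,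
    Set.empty_subset, and_true]

theorem primrecRel_mem {α : Type*} [Primcodable α] :
    PrimrecRel fun (a : α) (l : List α) => a ∈ l :=
  (PrimrecRel.exists_mem_list Primrec.eq).comp Primrec.snd Primrec.fst |>.of_eq fun _ => by simp

theorem primrec_conclusions : Primrec conclusions :=
  Primrec.listFilterMap Primrec.id (Primrec.list_head?.comp Primrec.snd).to₂

theorem primrecPred_isChained : PrimrecPred IsChained := by
  classical
  have hmem : PrimrecRel fun (m : ℕ) (w : List (List ℕ)) => m ∈ conclusions w :=
    primrecRel_mem.comp Primrec.fst (primrec_conclusions.comp Primrec.snd)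
  have hstep : PrimrecRel fun (l : List ℕ) (w : List (List ℕ)) =>
      ∀ m ∈ l.tail, m ∈ conclusions w :=
    (PrimrecRel.forall_mem_list hmem).comp (Primrec.list_tail.comp Primrec.fst) Primrec.snd
  refine Primrec.primrecPred <| (Primrec.list_rec Primrec.id (Primrec.const true)
    (Primrec.and.comp (hstep.decide.comp (Primrec.fst.comp Primrec.snd)
      (Primrec.fst.comp (Primrec.snd.comp Primrec.snd)))
      (Primrec.snd.comp (Primrec.snd.comp Primrec.snd))).to₂).of_eq fun w => ?_
  rw [Bool.eq_iff_iff, decide_eq_true_iff]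
  induction w with
  | nil => simp [IsChained]
  | cons l w ih => simp [IsChained, ← ih]

theorem rePred_derivable {S : Set (List ℕ)} (hS : REPred (· ∈ S)) :
    REPred (· ∈ Derivable S) := by
  refine REPred.exists_snd
    (R := fun x w => (∀ l ∈ w, l ∈ S) ∧ IsChained w ∧ x ∈ conclusions w) ?_
  refine (hS.forall_mem_list.comp Computable.snd).and (ComputablePred.to_re ?_)
  exact (primrecPred_isChained.comp Primrec.snd).and
    (primrecRel_mem.comp Primrec.fst (primrec_conclusions.comp Primrec.snd)) |>.computablePred

theorem rePred_union_singleton_image {S : Set (List ℕ)} {Y : Set ℕ} (hS : REPred (· ∈ S))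
    (hY : REPred (· ∈ Y)) : REPred (· ∈ S ∪ List.singleton '' Y) := by
  refine hS.or (REPred.exists_snd (R := fun l y => y ∈ Y ∧ [y] = l) ?_)
  refine (hY.comp Computable.snd).and (ComputablePred.to_re ?_)
  exact (Primrec.eq.comp (Primrec.list_cons.comp Primrec.snd (Primrec.const []))
    Primrec.fst).computablePred

end Horn

theorem closure_re_of_re_general (S : Set (List ℕ))
    (hS : REPred (· ∈ S))
    (Y : Set ℕ) (hY : REPred (· ∈ Y)) :
    REPred (· ∈ QVclosure S Y) := by
  rw [Horn.QVclosure_eq_QVclosure_union_singleton_image, Horn.QVclosure_empty_eq_derivable]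
  exact Horn.rePred_derivable (Horn.rePred_union_singleton_image hS hY)

/-- In an r.e. quasivariety, the closure of an r.e. set is r.e.; in particular
finitely or recursively presented points are recursively enumerable. -/
theorem closure_re_of_re (S : Set (List ℕ))
    (hne : ∀ l ∈ S, l ≠ []) (hS : REPred (· ∈ S))
    (Y : Set ℕ) (hY : REPred (· ∈ Y)) :
    REPred (· ∈ QVclosure S Y) :=
  closure_re_of_re_general S hS Y hY
end

section
/- Let A ⊆ ℕ with Aᶜ ≤ₑ A. Then there exists a recursively enumerable set S of nonempty lists of natural numbers such that A ∈ V(S) and A is a maximal element of V(S). -/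
/-- `X` is a maximal element of the quasivariety `QV S`. -/
def QVMaximal (S : Set (List ℕ)) (X : Set ℕ) : Prop :=
  X ∈ QV S ∧ ∀ Z ∈ QV S, X ⊆ Z → Z = X ∨ Z = Set.univ

/-!
Let `f` witness `Aᶜ ≤ₑ A`. For every `x`, every enumeration step `f (x, n) = some F` and every
`m`, take the Horn clause "if `x` and all of `F` are in `X`, then `m ∈ X`". A set `X` satisfies
all of them iff `X = univ` or `X` contains no element that `f` enumerates from `X`. Then `A`
satisfies them, since what `f` enumerates from `A` is exactly `Aᶜ`; and a satisfying `Z ⊋ A`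
enumerates all of `Aᶜ` by monotonicity, hence meets it, hence is `univ`.
-/

open Encodable Denumerable

theorem Computable.rePred_exists_eq_some {α β : Type*} [Primcodable α] [Primcodable β]
    [DecidableEq β] {g : α → Option β} (hg : Computable g) :
    REPred fun b => ∃ a, g a = some b := by
  set G : ℕ → Option β := fun n => (decode (α := α) n).bind g
  have hG : Computable G := Computable.option_bind Computable.decode (hg.comp .snd).to₂
  have hdec : Computable₂ fun (b : β) (n : ℕ) => decide (G n = some b) :=
    (Primrec.eq.decide.to_comp.comp (hG.comp .snd) (Computable.option_some.comp .fst)).to₂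
  refine (Partrec.rfind hdec.partrec₂).dom_re.of_eq fun b => Nat.rfind_dom.trans ?_
  constructor
  · rintro ⟨n, hn, -⟩
    have hGn : G n = some b := of_decide_eq_true (Part.mem_some_iff.1 hn).symm
    obtain ⟨a, -, ha⟩ := Option.bind_eq_some_iff.1 hGn
    exact ⟨a, ha⟩
  · rintro ⟨a, ha⟩
    refine ⟨encode a, Part.mem_some_iff.2 ?_, fun _ => trivial⟩
    simp [G, encodek, ha]

namespace Denumerable

theorem raise'_eq_map_add : ∀ (l : List ℕ) (n : ℕ), raise' l n = (raise' l 0).map (· + n)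
  | [], _ => rfl
  | m :: l, n => by
    simp only [raise', raise'_eq_map_add l (m + n + 1), raise'_eq_map_add l (m + 0 + 1),
      List.map_cons, List.map_map, Function.comp_def]
    grind

theorem primrec_raise'_zero : Primrec fun l : List ℕ => raise' l 0 := by
  have hstep : Primrec fun p : ℕ × List ℕ × List ℕ => p.1 :: p.2.2.map (· + (p.1 + 1)) :=
    Primrec.list_cons.comp .fst <| Primrec.list_map (Primrec.snd.comp .snd)
      (Primrec.nat_add.comp .snd (Primrec.succ.comp (Primrec.fst.comp .fst))).to₂
  refine (Primrec.list_rec .id (.const []) (hstep.comp .snd).to₂).of_eq fun l => ?_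
  induction l with
  | nil => rfl
  | cons m l ih => simp_all [raise', raise'_eq_map_add l (m + 1)]

end Denumerable

/-- This is `F.sort (· ≤ ·)`, read off the encoding of the `Primcodable (Finset ℕ)` instance
(not the one of `Finset.encodable`), so that its computability is visible. -/
def listOfFinset (F : Finset ℕ) : List ℕ :=
  raise' (ofNat (List ℕ) (@encode _ Denumerable.toEncodable F)) 0

theorem mem_listOfFinset {F : Finset ℕ} {a : ℕ} : a ∈ listOfFinset F ↔ a ∈ F := by
  have hF : ofNat (Finset ℕ) (@encode _ Denumerable.toEncodable F) = F := ofNat_encode F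
  conv_rhs => rw [← hF, ofNat_of_decode rfl]
  simp only [listOfFinset, eqv, Equiv.symm_mk, raise'Finset, Equiv.coe_fn_mk,
    Finset.mem_map_equiv, encode_nat]
  exact Iff.rfl

theorem computable_listOfFinset : Computable listOfFinset :=
  primrec_raise'_zero.to_comp.comp ((Computable.ofNat _).comp Computable.encode)

section HornClauses

variable {f : ℕ × ℕ → Option (Finset ℕ)}

def enumOp (f : ℕ × ℕ → Option (Finset ℕ)) (X : Set ℕ) : Set ℕ :=
  {x | ∃ n : ℕ, ∃ F : Finset ℕ, f (x, n) = some F ∧ ↑F ⊆ X}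

theorem enumOp_mono : Monotone (enumOp f) :=
  fun _ _ hXY _ ⟨n, F, hF, hFX⟩ => ⟨n, F, hF, hFX.trans hXY⟩

def hornClauses (f : ℕ × ℕ → Option (Finset ℕ)) : Set (List ℕ) :=
  {l | ∃ m x n : ℕ, ∃ F : Finset ℕ, f (x, n) = some F ∧ l = m :: x :: listOfFinset F}

theorem ne_nil_of_mem_hornClauses {l : List ℕ} (hl : l ∈ hornClauses f) : l ≠ [] := by
  obtain ⟨m, x, n, F, -, rfl⟩ := hl
  exact List.cons_ne_nil _ _

theorem rePred_hornClauses (hf : Computable f) : REPred (· ∈ hornClauses f) := by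
  have hclause : Computable₂ fun (p : ℕ × ℕ × ℕ) (F : Finset ℕ) =>
      p.1 :: p.2.1 :: listOfFinset F :=
    (Computable.list_cons.comp (Computable.fst.comp .fst) (Computable.list_cons.comp
      (Computable.fst.comp (Computable.snd.comp .fst)) (computable_listOfFinset.comp .snd))).to₂
  refine ((hf.comp .snd).option_map hclause).rePred_exists_eq_some.of_eq fun l => ?_
  simp [hornClauses, eq_comm]

theorem forall_mem_cons_listOfFinset {x : ℕ} {F : Finset ℕ} {X : Set ℕ} :
    (∀ a ∈ x :: listOfFinset F, a ∈ X) ↔ x ∈ X ∧ ↑F ⊆ X := by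
  simp [mem_listOfFinset, Set.subset_def]

theorem mem_QV_hornClauses_iff {X : Set ℕ} :
    X ∈ QV (hornClauses f) ↔ X = Set.univ ∨ Disjoint X (enumOp f X) := by
  constructor
  · intro hX
    refine or_iff_not_imp_right.2 fun hmeet => Set.eq_univ_of_forall fun m => ?_
    obtain ⟨x, hxX, n, F, hF, hFX⟩ := Set.not_disjoint_iff.1 hmeet
    exact hX m _ ⟨m, x, n, F, hF, rfl⟩ (forall_mem_cons_listOfFinset.2 ⟨hxX, hFX⟩)
  · rintro (rfl | hdisj) m₀ t ⟨m, x, n, F, hF, hl⟩ ht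
    · trivial
    · obtain ⟨rfl, rfl⟩ := List.cons.inj hl
      obtain ⟨hxX, hFX⟩ := forall_mem_cons_listOfFinset.1 ht
      exact (Set.disjoint_left.1 hdisj hxX ⟨n, F, hF, hFX⟩).elim

end HornClauses

/-- Converse: if `Aᶜ ≤ₑ A` then `A` is maximal in some r.e. quasivariety. -/
theorem maximal_of_compl_enumRed (A : Set ℕ) (h : EnumRed Aᶜ A) :
    ∃ S : Set (List ℕ), (∀ l ∈ S, l ≠ []) ∧ REPred (· ∈ S) ∧
      A ∈ QV S ∧ QVMaximal S A := by
  obtain ⟨f, hf, hAf⟩ := h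
  have hA : enumOp f A = Aᶜ := (Set.ext hAf).symm
  have hAQV : A ∈ QV (hornClauses f) :=
    mem_QV_hornClauses_iff.2 (.inr (hA ▸ disjoint_compl_right))
  refine ⟨hornClauses f, fun _ => ne_nil_of_mem_hornClauses, rePred_hornClauses hf, hAQV, hAQV,
    fun Z hZ hAZ => ?_⟩
  rcases mem_QV_hornClauses_iff.1 hZ with hZ | hZ
  · exact .inr hZ
  · have hcompl : Aᶜ ⊆ enumOp f Z := hA ▸ enumOp_mono hAZ
    exact .inl (hAZ.antisymm' (hZ.subset_compl_right.trans (Set.compl_subset_comm.1 hcompl)))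
end

section
/- Let n : ℕ and let N be a normal subgroup of FreeGroup (Fin n) such that the quotient group FreeGroup (Fin n) ⧸ N is a simple group (IsSimpleGroup). Then the complement of the word problem W(N) is enumeration reducible to W(N): W(N)ᶜ ≤ₑ W(N). -/
/-- The word problem of the marked group `FreeGroup (Fin n) ⧸ N`: the set of
words over the generators and their inverses whose product lies in `N`. -/
def wordProblem (n : ℕ) (N : Subgroup (FreeGroup (Fin n))) :
    Set (List (Fin n × Bool)) :=
  {l : List (Fin n × Bool) |
    (l.map (fun p => cond p.2 (FreeGroup.of p.1) (FreeGroup.of p.1)⁻¹)).prod ∈ N}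

/-- The subset of `ℕ` corresponding to a set of encodable elements. -/
def encSet {α : Type*} [Encodable α] (A : Set α) : Set ℕ :=
  Encodable.encode '' A

/-!
In a simple quotient `G = F ⧸ N`, the image of a word `w` is nontrivial iff its normal closure
is all of `G`, i.e. iff every generator `xᵢ` is congruent modulo `N` to a product of conjugates
of `w^{±1}`. Such products can be guessed, and the guess is confirmed by finitely many positive
queries to the word problem, namely `xᵢ · (product)⁻¹ ∈ N`. Conversely, if `w ∈ N` these products
lie in `N`, so passing all queries would put every generator in `N`, making `G` trivial.
-/

open Encodable Denumerable

namespace Denumerable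

private def raiseStep (s : List ℕ × ℕ) (m : ℕ) : List ℕ × ℕ :=
  (s.1 ++ [m + s.2], m + s.2 + 1)

private theorem foldl_raiseStep (l acc : List ℕ) (n : ℕ) :
    (l.foldl raiseStep (acc, n)).1 = acc ++ raise' l n := by
  induction l generalizing acc n with
  | nil => simp [raise']
  | cons m l ih => simp [raise', raiseStep, ih]

open Primrec in
theorem primrec₂_raise' : Primrec₂ raise' := by
  have hstep : Primrec₂ raiseStep :=
    Primrec.pair (list_concat.comp (fst.comp fst) (nat_add.comp snd (snd.comp fst)))
      (succ.comp (nat_add.comp snd (snd.comp fst)))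
  exact (fst.comp (list_foldl fst (Primrec.pair (const []) snd)
    (hstep.comp (fst.comp snd) (snd.comp snd)).to₂)).of_eq fun p => by
      simpa using foldl_raiseStep p.1 [] p.2

theorem mem_ofNat_finset_iff (c k : ℕ) :
    c ∈ ofNat (Finset ℕ) k ↔ c ∈ raise' (ofNat (List ℕ) k) 0 := by
  rw [ofNat_of_decode (α := Finset ℕ) (n := k)
    (b := (raise'Finset (ofNat (List ℕ) k) 0).map (eqv ℕ).symm.toEmbedding) rfl]
  simp [raise'Finset, Denumerable.eqv, ← Finset.mem_val]

theorem primrecRel_mem_ofNat_finset : PrimrecRel fun c k : ℕ => c ∈ ofNat (Finset ℕ) k :=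
  ((PrimrecRel.exists_mem_list Primrec.eq).comp
    (primrec₂_raise'.comp ((Primrec.ofNat _).comp Primrec.snd) (Primrec.const 0))
    Primrec.fst).of_eq fun p => by simp [mem_ofNat_finset_iff]

end Denumerable

section TestReduction

variable {α β γ : Type*} [Primcodable α] [Primcodable β] [Primcodable γ]

/-- The witness `q.2` codes a certificate `c` together with the code `k` of a finite set, which is
produced as part of the witness because building it from the list of tests is not obviously
primitive recursive; the guard `encode a = q.1` rejects numbers that are not codes. -/
def testReduction (tests : α → γ → List β) (q : ℕ × ℕ) : Option (Finset ℕ) :=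
  (decode (α := α) q.1).bind fun a =>
    if encode a = q.1 then
      (decode (α := γ × ℕ) q.2).bind fun ck =>
        if ∀ b ∈ tests a ck.1, encode b ∈ ofNat (Finset ℕ) ck.2 then
          some (ofNat (Finset ℕ) ck.2)
        else none
    else none

open Primrec in
theorem primrec_testReduction {tests : α → γ → List β} (htests : Primrec₂ tests) :
    Primrec (testReduction tests) := by
  have hcheck : PrimrecPred fun p : ((ℕ × ℕ) × α) × (γ × ℕ) =>
      ∀ b ∈ tests p.1.2 p.2.1, encode b ∈ ofNat (Finset ℕ) p.2.2 :=
    (primrecRel_mem_ofNat_finset.comp₂ (Primrec.encode.comp₂ Primrec₂.left)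
      Primrec₂.right).forall_mem_list.comp
      (htests.comp (snd.comp fst) (fst.comp snd)) (snd.comp snd)
  exact option_bind (Primrec.decode.comp fst) <|
    Primrec.ite (Primrec.eq.comp (Primrec.encode.comp snd) (fst.comp fst))
      (option_bind (Primrec.decode.comp (snd.comp fst)) <|
        Primrec.ite hcheck (option_some.comp ((Primrec.ofNat _).comp (snd.comp snd)))
          (const none))
      (const none)

theorem enumRed_encSet_of_primrec_tests {A : Set α} {B : Set β} {tests : α → γ → List β}
    (htests : Primrec₂ tests) (hA : ∀ a, a ∈ A ↔ ∃ c, ∀ b ∈ tests a c, b ∈ B) :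
    EnumRed (encSet A) (encSet B) := by
  refine ⟨testReduction tests, (primrec_testReduction htests).to_comp, fun x => ⟨?_, ?_⟩⟩
  · rintro ⟨a, ha, rfl⟩
    obtain ⟨c, hc⟩ := (hA a).1 ha
    obtain ⟨k, hk⟩ : ∃ k, ofNat (Finset ℕ) k = ((tests a c).map encode).toFinset :=
      ⟨_, ofNat_encode _⟩
    refine ⟨encode (c, k), ofNat (Finset ℕ) k, ?_, ?_⟩
    · simp [testReduction, hk]
    · simpa [hk, Set.subset_def, encSet] using hc
  · rintro ⟨m, F, hF, hFB⟩
    simp only [testReduction, Option.bind_eq_some_iff, Option.ite_none_right_eq_some,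
      Option.some.injEq] at hF
    obtain ⟨a, -, rfl, ⟨c, k⟩, -, hck, rfl⟩ := hF
    refine ⟨a, (hA a).2 ⟨c, fun b hb => ?_⟩, rfl⟩
    obtain ⟨b', hb', hbb'⟩ := hFB (hck b hb)
    rwa [← encode_injective hbb']

end TestReduction

namespace FreeGroup

variable {α : Type*}

def conjProd (w : List (α × Bool)) (t : List (List (α × Bool) × Bool)) : List (α × Bool) :=
  t.flatMap fun p => p.1 ++ cond p.2 w (invRev w) ++ invRev p.1

theorem mk_conjProd_nil (w : List (α × Bool)) : mk (conjProd w []) = 1 := rfl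

theorem mk_conjProd_cons (w c : List (α × Bool)) (b : Bool) (t : List (List (α × Bool) × Bool)) :
    mk (conjProd w ((c, b) :: t)) =
      mk c * cond b (mk w) (mk w)⁻¹ * (mk c)⁻¹ * mk (conjProd w t) := by
  cases b <;> simp [conjProd, inv_mk, mul_mk]

theorem mk_conjProd_append (w : List (α × Bool)) (t t' : List (List (α × Bool) × Bool)) :
    mk (conjProd w (t ++ t')) = mk (conjProd w t) * mk (conjProd w t') := by
  simp [conjProd, mul_mk]

theorem mk_conjProd_mem_normalClosure (w : List (α × Bool)) (t : List (List (α × Bool) × Bool)) :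
    mk (conjProd w t) ∈ Subgroup.normalClosure {mk w} := by
  induction t with
  | nil => exact one_mem _
  | cons p t ih =>
    obtain ⟨c, b⟩ := p
    have hw : mk w ∈ Subgroup.normalClosure {mk w} := Subgroup.subset_normalClosure rfl
    rw [mk_conjProd_cons]
    refine mul_mem (Subgroup.normalClosure_normal.conj_mem _ ?_ _) ih
    cases b
    exacts [inv_mem hw, hw]

theorem exists_conjProd_eq_of_mem_normalClosure {w : List (α × Bool)} {y : FreeGroup α}
    (hy : y ∈ Subgroup.normalClosure {mk w}) : ∃ t, mk (conjProd w t) = y := by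
  classical
  induction hy using Subgroup.closure_induction'' with
  | mem x hx =>
    obtain ⟨_, rfl, hconj⟩ := Group.mem_conjugatesOfSet_iff.1 hx
    obtain ⟨c, rfl⟩ := isConj_iff.1 hconj
    exact ⟨[(toWord c, true)], by rw [mk_conjProd_cons, mk_conjProd_nil, mk_toWord]; simp⟩
  | inv_mem x hx =>
    obtain ⟨_, rfl, hconj⟩ := Group.mem_conjugatesOfSet_iff.1 hx
    obtain ⟨c, rfl⟩ := isConj_iff.1 hconj
    refine ⟨[(toWord c, false)], ?_⟩
    rw [mk_conjProd_cons, mk_conjProd_nil, mk_toWord, cond_false, mul_one]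
    group
  | one => exact ⟨[], rfl⟩
  | mul x y _ _ hx hy =>
    obtain ⟨t, rfl⟩ := hx
    obtain ⟨t', rfl⟩ := hy
    exact ⟨t ++ t', mk_conjProd_append w t t'⟩

open Primrec in
theorem primrec_invRev [Primcodable α] : Primrec (invRev (α := α)) :=
  list_reverse.comp <| list_map Primrec.id <|
    Primrec.pair (fst.comp snd) (Primrec.not.comp (snd.comp snd))

open Primrec in
theorem primrec₂_conjProd [Primcodable α] : Primrec₂ (conjProd (α := α)) :=
  list_flatMap snd <| list_append.comp
    (list_append.comp (fst.comp snd)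
      (Primrec.cond (snd.comp snd) (fst.comp fst) (primrec_invRev.comp (fst.comp fst))))
    (primrec_invRev.comp (fst.comp snd))

theorem mk_notMem_iff_forall_exists_conjProd {N : Subgroup (FreeGroup α)} [N.Normal]
    (hN : IsSimpleGroup (FreeGroup α ⧸ N)) (w : List (α × Bool)) :
    mk w ∉ N ↔ ∀ a : α, ∃ t, of a * (mk (conjProd w t))⁻¹ ∈ N := by
  constructor
  · intro hw a
    have htop : Subgroup.normalClosure {(mk w : FreeGroup α ⧸ N)} = ⊤ :=
      Subgroup.normalClosure_normal.eq_bot_or_eq_top.resolve_left fun h => hw <| by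
        rw [← QuotientGroup.eq_one_iff, ← Subgroup.mem_bot, ← h]
        exact Subgroup.subset_normalClosure rfl
    have hof : (of a : FreeGroup α ⧸ N) ∈
        (Subgroup.normalClosure {mk w}).map (QuotientGroup.mk' N) := by
      rw [Subgroup.map_normalClosure _ _ (QuotientGroup.mk'_surjective N), Set.image_singleton]
      simp [htop]
    obtain ⟨y, hy, hya⟩ := hof
    obtain ⟨t, rfl⟩ := exists_conjProd_eq_of_mem_normalClosure hy
    exact ⟨t, by simpa [div_eq_mul_inv] using QuotientGroup.eq_iff_div_mem.1 hya.symm⟩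
  · intro ht hw
    have hle : Subgroup.normalClosure {mk w} ≤ N := Subgroup.normalClosure_le_normal (by simpa)
    have hof : ∀ a, of a ∈ N := fun a => by
      obtain ⟨t, ht⟩ := ht a
      simpa only [inv_mul_cancel_right] using
        mul_mem ht (hle (mk_conjProd_mem_normalClosure w t))
    have htop : N = ⊤ := eq_top_iff.2 <| (closure_range_of α).ge.trans <|
      (Subgroup.closure_le N).2 (Set.range_subset_iff.2 hof)
    subst htop
    exact @not_subsingleton _ hN.toNontrivial QuotientGroup.subsingleton_quotient_top

end FreeGroup

open FreeGroup

theorem mem_wordProblem_iff {n : ℕ} {N : Subgroup (FreeGroup (Fin n))}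
    {l : List (Fin n × Bool)} :
    l ∈ wordProblem n N ↔ mk l ∈ N := by
  rw [wordProblem, Set.mem_ofPred_eq, ← lift_mk, lift_of_apply]

def wordProblemTests (n : ℕ) (w : List (Fin n × Bool))
    (t : Fin n → List (List (Fin n × Bool) × Bool)) : List (List (Fin n × Bool)) :=
  (List.finRange n).map fun i => (i, true) :: invRev (conjProd w (t i))

open Primrec in
theorem primrec₂_wordProblemTests (n : ℕ) : Primrec₂ (wordProblemTests n) :=
  list_map (const _) <| list_cons.comp (Primrec.pair snd (const true)) <|
    primrec_invRev.comp <| primrec₂_conjProd.comp (fst.comp fst) <|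
      fin_app.comp (snd.comp fst) snd

theorem notMem_wordProblem_iff {n : ℕ} {N : Subgroup (FreeGroup (Fin n))} [N.Normal]
    (hsimple : IsSimpleGroup (FreeGroup (Fin n) ⧸ N)) (w : List (Fin n × Bool)) :
    w ∉ wordProblem n N ↔ ∃ t, ∀ v ∈ wordProblemTests n w t, v ∈ wordProblem n N := by
  have hmk (i : Fin n) (l : List (Fin n × Bool)) :
      mk ((i, true) :: invRev l) = of i * (mk l)⁻¹ := by
    rw [inv_mk, of, mul_mk, List.singleton_append]
  simp only [mem_wordProblem_iff, mk_notMem_iff_forall_exists_conjProd hsimple, wordProblemTests,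
    List.forall_mem_map, List.mem_finRange, true_implies, hmk]
  exact Classical.skolem

/-- For a finitely generated simple group, the complement of the word problem is
enumeration reducible to the word problem. -/
theorem compl_wordProblem_enumRed_of_simple (n : ℕ)
    (N : Subgroup (FreeGroup (Fin n))) [N.Normal]
    (hsimple : IsSimpleGroup (FreeGroup (Fin n) ⧸ N)) :
    EnumRed (encSet (wordProblem n N)ᶜ) (encSet (wordProblem n N)) :=
  enumRed_encSet_of_primrec_tests (primrec₂_wordProblemTests n) (notMem_wordProblem_iff hsimple)
end
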